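/- Let X, Z be the 2 × 2 Pauli matrices with real powers Z^t = diag(1, e^{iπt}) and X^t = H Z^t H. Define the Gray-code map g : {0,1}² → {0,1,2,3} by g(0,0) = 0, g(0,1) = 1, g(1,1) = 2, g(1,0) = 3. Given four bits a⁰₀, a⁰₁, a¹₀, a¹₁ ∈ {0,1}, set e_j = g(a⁰_j, a¹_j) for j = 0,1 and define Alice's encoded state |ψ_enc⟩ = ((√X)^{e₀}(√Z)^{e₁} ⊗ I)|ψ⁺⟩ = (X^{e₀/2} Z^{e₁/2} ⊗ I)|ψ⁺⟩, and Bob's decoding vectors |φ^c_{b₀,b₁}⟩ = (X^{(−1)^c b₀ + (1−2c)/4} Z^{(−1)^c b₁ + (1−2c)/4} ⊗ I)|ψ⁺⟩ for c, b₀, b₁ ∈ {0,1}. Then for every choice bit c ∈ {0,1} and all input bits, the probability of correct decoding equals |⟨φ^c_{a^c₀, a^c₁}|ψ_enc⟩|² = (3 + 2√2)/8. Consequently, for this protocol the minimum and average success probabilities of the QRAC-SE task 2₄ → (1₂, 1₂) coincide and equal (3 + 2√2)/8 ≈ 0.728. -/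

import Mathlib

/-! Write `ε(t) = exp(iπt)`. Both `t ↦ Z^t` and `t ↦ X^t = H Z^t H` (with `H² = I`) are
one-parameter groups of unitaries, and `⟨(B ⊗ I)ψ⁺, (A ⊗ I)ψ⁺⟩ = tr(B†A)/2`. Hence the overlap of
`(X^s Z^t ⊗ I)ψ⁺` and `(X^{s'} Z^{t'} ⊗ I)ψ⁺` is `tr(X^{s'-s} Z^{t'-t})/2 = (1 + ε(s'-s))(1 + ε(t'-t))/4`,
of squared modulus `(1 + cos π(s'-s))(1 + cos π(t'-t))/4`. The Gray code makes each exponent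
difference `e_j/2 - ((-1)^c a^c_j + (1-2c)/4)` equal to `±1/4` modulo `2`, so both cosines are
`√2/2` and every success probability is `(1 + √2/2)²/4 = (3 + 2√2)/8`. -/

open Matrix Kronecker BigOperators Complex

noncomputable section

/-- The maximally entangled state `|ψ⁺⟩ = (1/√2)(|00⟩ + |11⟩)` on `ℂ² ⊗ ℂ²`. -/
def mes2 : Fin 2 × Fin 2 → ℂ :=
  fun p => if p.1 = p.2 then ((1 / Real.sqrt 2 : ℝ) : ℂ) else 0

/-- The Hadamard matrix `H = (1/√2)[[1,1],[1,−1]]`. -/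
def Hm : Matrix (Fin 2) (Fin 2) ℂ :=
  ((1 / Real.sqrt 2 : ℝ) : ℂ) • !![1, 1; 1, -1]

/-- Real powers of the Pauli `Z`: `Z^t = diag(1, e^{iπt})`. -/
def Zpow (t : ℝ) : Matrix (Fin 2) (Fin 2) ℂ :=
  !![1, 0; 0, Complex.exp (Real.pi * t * Complex.I)]

/-- Real powers of the Pauli `X`: `X^t = H Z^t H`. -/
def Xpow (t : ℝ) : Matrix (Fin 2) (Fin 2) ℂ :=
  Hm * Zpow t * Hm

/-- Overlap `⟨ψ⁺|(X^s Z^t ⊗ I)|ψ⁺⟩`. -/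
def overlap (s t : ℝ) : ℂ :=
  star mes2 ⬝ᵥ ((Xpow s * Zpow t) ⊗ₖ (1 : Matrix (Fin 2) (Fin 2) ℂ)).mulVec mes2

/-- Bob's decoding vectors
`|φ^c_{b₀,b₁}⟩ = (X^{(−1)^c b₀ + (1−2c)/4} Z^{(−1)^c b₁ + (1−2c)/4} ⊗ I)|ψ⁺⟩`. -/
def bobVec (c b₀ b₁ : Fin 2) : Fin 2 × Fin 2 → ℂ :=
  ((Xpow ((-1 : ℝ) ^ (c : ℕ) * ((b₀ : ℕ) : ℝ) + (1 - 2 * ((c : ℕ) : ℝ)) / 4) *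
      Zpow ((-1 : ℝ) ^ (c : ℕ) * ((b₁ : ℕ) : ℝ) + (1 - 2 * ((c : ℕ) : ℝ)) / 4)) ⊗ₖ
    (1 : Matrix (Fin 2) (Fin 2) ℂ)).mulVec mes2

/-- The Gray-code map `g : {0,1}² → {0,1,2,3}`,
`g(0,0) = 0, g(0,1) = 1, g(1,1) = 2, g(1,0) = 3`. -/
def gray (a₀ a₁ : Fin 2) : ℕ :=
  if a₀ = 0 then (if a₁ = 0 then 0 else 1) else (if a₁ = 0 then 3 else 2)

/-- Alice's encoded state `|ψ_enc⟩ = (X^{e₀/2} Z^{e₁/2} ⊗ I)|ψ⁺⟩` for encoding digits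
`e₀, e₁ ∈ {0,1,2,3}`. -/
def aliceEnc (e₀ e₁ : ℕ) : Fin 2 × Fin 2 → ℂ :=
  ((Xpow ((e₀ : ℝ) / 2) * Zpow ((e₁ : ℝ) / 2)) ⊗ₖ (1 : Matrix (Fin 2) (Fin 2) ℂ)).mulVec mes2

/-- The success probability of the QRAC-SE protocol on input bits `a i j` (string `i`,
bit `j`) and choice `c`: the squared overlap of Bob's decoding vector for the correct guess
with Alice's encoded state, where `e_j = g(a⁰_j, a¹_j)`. -/
def succProb (a : Fin 2 → Fin 2 → Fin 2) (c : Fin 2) : ℝ :=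
  ‖(star (bobVec c (a c 0) (a c 1)) ⬝ᵥ
      aliceEnc (gray (a 0 0) (a 1 0)) (gray (a 0 1) (a 1 1)))‖ ^ 2

def phase (t : ℝ) : ℂ := Complex.exp (Real.pi * t * Complex.I)

lemma phase_add (s t : ℝ) : phase (s + t) = phase s * phase t := by
  simp only [phase, ← Complex.exp_add]
  push_cast
  ring_nf

lemma star_phase (t : ℝ) : star (phase t) = phase (-t) := by
  simp only [phase, Complex.star_def, ← Complex.exp_conj, map_mul, Complex.conj_ofReal,
    Complex.conj_I]
  push_cast
  ring_nf

lemma norm_one_add_phase_sq (u : ℝ) : ‖1 + phase u‖ ^ 2 = 2 + 2 * Real.cos (Real.pi * u) := by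
  have h : phase u = Real.cos (Real.pi * u) + Real.sin (Real.pi * u) * Complex.I := by
    rw [phase, show (Real.pi : ℂ) * u * Complex.I = ((Real.pi * u : ℝ) : ℂ) * Complex.I by
      push_cast; ring, Complex.exp_mul_I, Complex.ofReal_cos, Complex.ofReal_sin]
  rw [Complex.sq_norm, h, Complex.normSq_apply]
  simp only [Complex.add_re, Complex.add_im, Complex.one_re, Complex.one_im, Complex.mul_re,
    Complex.mul_im, Complex.I_re, Complex.I_im, Complex.ofReal_re, Complex.ofReal_im]
  nlinarith [Real.sin_sq_add_cos_sq (Real.pi * u)]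

lemma inv_sqrt_two_mul_self :
    ((1 / Real.sqrt 2 : ℝ) : ℂ) * ((1 / Real.sqrt 2 : ℝ) : ℂ) = 1 / 2 := by
  rw [← Complex.ofReal_mul, div_mul_div_comm, one_mul, Real.mul_self_sqrt zero_le_two]
  push_cast
  rfl

lemma Zpow_eq (t : ℝ) : Zpow t = !![1, 0; 0, phase t] := rfl

lemma Zpow_add (s t : ℝ) : Zpow (s + t) = Zpow s * Zpow t := by
  ext i j
  fin_cases i <;> fin_cases j <;> simp [Zpow_eq, phase_add]

lemma conjTranspose_Zpow (t : ℝ) : (Zpow t)ᴴ = Zpow (-t) := by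
  ext i j
  fin_cases i <;> fin_cases j <;> simp [Zpow_eq, ← star_phase]

lemma conjTranspose_Hm : Hmᴴ = Hm := by
  ext i j
  fin_cases i <;> fin_cases j <;> simp [Hm]

lemma Hm_mul_Hm : Hm * Hm = 1 := by
  simp only [Hm, Matrix.smul_mul, Matrix.mul_smul, smul_smul, inv_sqrt_two_mul_self,
    Matrix.mul_fin_two, Matrix.one_fin_two]
  ext i j
  fin_cases i <;> fin_cases j <;> norm_num

lemma Xpow_eq (t : ℝ) :
    Xpow t = (1 / 2 : ℂ) • !![1 + phase t, 1 - phase t; 1 - phase t, 1 + phase t] := by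
  simp only [Xpow, Hm, Zpow_eq, Matrix.smul_mul, Matrix.mul_smul, smul_smul,
    inv_sqrt_two_mul_self, Matrix.mul_fin_two]
  congr 1
  ext i j
  fin_cases i <;> fin_cases j <;> simp [sub_eq_add_neg]

lemma Xpow_add (s t : ℝ) : Xpow (s + t) = Xpow s * Xpow t := by
  simp only [Xpow, Zpow_add, Matrix.mul_assoc]
  rw [← Matrix.mul_assoc Hm Hm, Hm_mul_Hm, Matrix.one_mul]

lemma conjTranspose_Xpow (t : ℝ) : (Xpow t)ᴴ = Xpow (-t) := by
  simp only [Xpow, Matrix.conjTranspose_mul, conjTranspose_Hm, conjTranspose_Zpow,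
    Matrix.mul_assoc]

lemma trace_Xpow_mul_Zpow (u v : ℝ) :
    (Xpow u * Zpow v).trace = (1 + phase u) * (1 + phase v) / 2 := by
  rw [Xpow_eq, Zpow_eq, Matrix.smul_mul, Matrix.trace_smul, Matrix.mul_fin_two,
    Matrix.trace_fin_two]
  simp only [Matrix.of_apply, Matrix.cons_val', Matrix.cons_val_zero, Matrix.cons_val_one,
    Matrix.cons_val_fin_one, smul_eq_mul]
  ring

lemma kronecker_one_mulVec_mes2 (A : Matrix (Fin 2) (Fin 2) ℂ) :
    (A ⊗ₖ (1 : Matrix (Fin 2) (Fin 2) ℂ)).mulVec mes2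
      = fun p => ((1 / Real.sqrt 2 : ℝ) : ℂ) * A p.1 p.2 := by
  ext ⟨i, j⟩
  simp [Matrix.mulVec, dotProduct, Fintype.sum_prod_type, Matrix.kroneckerMap_apply,
    Matrix.one_apply, mes2, mul_comm]

lemma dotProduct_kronecker_one_mes2 (A B : Matrix (Fin 2) (Fin 2) ℂ) :
    star ((B ⊗ₖ (1 : Matrix (Fin 2) (Fin 2) ℂ)).mulVec mes2) ⬝ᵥ
      (A ⊗ₖ (1 : Matrix (Fin 2) (Fin 2) ℂ)).mulVec mes2 = (Bᴴ * A).trace / 2 := by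
  rw [kronecker_one_mulVec_mes2, kronecker_one_mulVec_mes2]
  simp only [dotProduct, Pi.star_apply, star_mul', Complex.star_def, Complex.conj_ofReal,
    Fintype.sum_prod_type, Fin.sum_univ_two, Matrix.trace_fin_two, Matrix.mul_apply,
    Matrix.conjTranspose_apply]
  linear_combination (starRingEnd ℂ (B 0 0) * A 0 0 + starRingEnd ℂ (B 0 1) * A 0 1 +
    starRingEnd ℂ (B 1 0) * A 1 0 + starRingEnd ℂ (B 1 1) * A 1 1) * inv_sqrt_two_mul_self

lemma dotProduct_XZ_states (s t s' t' : ℝ) :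
    star (((Xpow s * Zpow t) ⊗ₖ (1 : Matrix (Fin 2) (Fin 2) ℂ)).mulVec mes2) ⬝ᵥ
      ((Xpow s' * Zpow t') ⊗ₖ (1 : Matrix (Fin 2) (Fin 2) ℂ)).mulVec mes2
      = (1 + phase (s' - s)) * (1 + phase (t' - t)) / 4 := by
  have hX : Xpow (-s) * Xpow s' = Xpow (s' - s) := by rw [← Xpow_add]; ring_nf
  have hZ : Zpow t' * Zpow (-t) = Zpow (t' - t) := by rw [← Zpow_add]; ring_nf
  rw [dotProduct_kronecker_one_mes2, Matrix.conjTranspose_mul, conjTranspose_Xpow,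
    conjTranspose_Zpow, Matrix.mul_assoc, Matrix.trace_mul_comm,
    ← Matrix.mul_assoc (Xpow (-s)), hX, Matrix.mul_assoc, hZ, trace_Xpow_mul_Zpow]
  ring

lemma norm_dotProduct_XZ_states_sq (s t s' t' : ℝ) :
    ‖star (((Xpow s * Zpow t) ⊗ₖ (1 : Matrix (Fin 2) (Fin 2) ℂ)).mulVec mes2) ⬝ᵥ
      ((Xpow s' * Zpow t') ⊗ₖ (1 : Matrix (Fin 2) (Fin 2) ℂ)).mulVec mes2‖ ^ 2
      = (1 + Real.cos (Real.pi * (s' - s))) * (1 + Real.cos (Real.pi * (t' - t))) / 4 := by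
  rw [dotProduct_XZ_states, norm_div, norm_mul, div_pow, mul_pow, norm_one_add_phase_sq,
    norm_one_add_phase_sq]
  norm_num
  ring

lemma cos_pi_mul_eq_of_quarter {q : ℝ} (h : ∃ k : ℤ, q = 1 / 4 + 2 * k ∨ q = -(1 / 4) + 2 * k) :
    Real.cos (Real.pi * q) = Real.sqrt 2 / 2 := by
  obtain ⟨k, rfl | rfl⟩ := h
  · rw [show Real.pi * (1 / 4 + 2 * k) = Real.pi / 4 + k * (2 * Real.pi) by ring,
      Real.cos_add_int_mul_two_pi, Real.cos_pi_div_four]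
  · rw [show Real.pi * (-(1 / 4) + 2 * k) = -(Real.pi / 4) + k * (2 * Real.pi) by ring,
      Real.cos_add_int_mul_two_pi, Real.cos_neg, Real.cos_pi_div_four]

lemma cos_pi_mul_gray_sub_decoding (a : Fin 2 → Fin 2 → Fin 2) (j c : Fin 2) :
    Real.cos (Real.pi * ((gray (a 0 j) (a 1 j) : ℝ) / 2 -
        ((-1 : ℝ) ^ (c : ℕ) * ((a c j : ℕ) : ℝ) + (1 - 2 * ((c : ℕ) : ℝ)) / 4)))
      = Real.sqrt 2 / 2 := by
  apply cos_pi_mul_eq_of_quarter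
  have hbit : ∀ i, a i j = 0 ∨ a i j = 1 := fun i => by omega
  fin_cases c <;> rcases hbit 0 with h0 | h0 <;> rcases hbit 1 with h1 | h1 <;>
    simp only [Fin.zero_eta, Fin.mk_one, h0, h1, gray, one_ne_zero, if_true, if_false] <;>
    first
    | refine ⟨0, ?_⟩; norm_num; done
    | refine ⟨1, ?_⟩; norm_num

lemma succProb_eq (a : Fin 2 → Fin 2 → Fin 2) (c : Fin 2) :
    succProb a c = (3 + 2 * Real.sqrt 2) / 8 := by
  rw [succProb, bobVec, aliceEnc, norm_dotProduct_XZ_states_sq,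
    cos_pi_mul_gray_sub_decoding a 0 c, cos_pi_mul_gray_sub_decoding a 1 c]
  linear_combination Real.mul_self_sqrt (zero_le_two : (0 : ℝ) ≤ 2) / 16

/-- For every choice bit `c` and all input bits the decoding probability equals
`(3 + 2√2)/8 ≈ 0.728`; consequently the minimum and the average success probabilities of
the QRAC-SE task `2₄ → (1₂, 1₂)` coincide and equal `(3 + 2√2)/8`. -/
theorem qracse_qubit_success :
    (∀ (a : Fin 2 → Fin 2 → Fin 2) (c : Fin 2),
        succProb a c = (3 + 2 * Real.sqrt 2) / 8) ∧
    (1 / 32 : ℝ) * ∑ c : Fin 2, ∑ a : Fin 2 → Fin 2 → Fin 2, succProb a c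
        = (3 + 2 * Real.sqrt 2) / 8 := by
  refine ⟨succProb_eq, ?_⟩
  simp only [succProb_eq, Finset.sum_const, Finset.card_univ, nsmul_eq_mul]
  norm_num
  ring
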